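/- (Proposition: equivalence of the SLS parameterization and the disturbance-feedback parameterization of Goulart et al.) Fix w ∈ ℝ^{(T+1)n}. Then the following two sets of trajectory pairs (x, u) ∈ ℝ^{(T+1)n} × ℝ^{(T+1)p} coincide: (i) the set of pairs for which there exist block lower triangular matrices Φ_x ∈ ℝ^{(T+1)n×(T+1)n} and Φ_u ∈ ℝ^{(T+1)p×(T+1)n} satisfying (I − ZÂ)Φ_x − ZB̂Φ_u = I, x = Φ_x w, and u = Φ_u w; and (ii) the set of pairs for which there exists a block lower triangular matrix M ∈ ℝ^{(T+1)p×(T+1)n} with u = Mw and (I − ZÂ)x = ZB̂u + w. -/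

import Mathlib

/-- Block lower triangular: the `((t,i),(s,j))` entry vanishes whenever `s > t`. -/
def BlockLT {a b T : ℕ}
    (M : Matrix (Fin (T + 1) × Fin a) (Fin (T + 1) × Fin b) ℝ) : Prop :=
  ∀ (t s : Fin (T + 1)) (i : Fin a) (j : Fin b), t < s → M (t, i) (s, j) = 0

/-- Strictly block lower triangular: the `((t,i),(s,j))` entry vanishes whenever `s ≥ t`. -/
def StrictBlockLT {a b T : ℕ}
    (M : Matrix (Fin (T + 1) × Fin a) (Fin (T + 1) × Fin b) ℝ) : Prop :=
  ∀ (t s : Fin (T + 1)) (i : Fin a) (j : Fin b), t ≤ s → M (t, i) (s, j) = 0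

/-- The block-downshift matrix `Z`: the `((t,i),(s,j))` entry is `1` iff `t = s + 1` and `i = j`. -/
def shiftZ (n T : ℕ) : Matrix (Fin (T + 1) × Fin n) (Fin (T + 1) × Fin n) ℝ :=
  fun r c => if (r.1 : ℕ) = (c.1 : ℕ) + 1 ∧ r.2 = c.2 then 1 else 0

/-- `Â = blkdiag(A, …, A)`. -/
def hatA {n : ℕ} (T : ℕ) (A : Matrix (Fin n) (Fin n) ℝ) :
    Matrix (Fin (T + 1) × Fin n) (Fin (T + 1) × Fin n) ℝ :=
  fun r c => if r.1 = c.1 then A r.2 c.2 else 0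

/-- `B̂ = blkdiag(B, …, B, 0)`. -/
def hatB {n p : ℕ} (T : ℕ) (B : Matrix (Fin n) (Fin p) ℝ) :
    Matrix (Fin (T + 1) × Fin n) (Fin (T + 1) × Fin p) ℝ :=
  fun r c => if r.1 = c.1 ∧ (c.1 : ℕ) < T then B r.2 c.2 else 0

/-! The forward direction is the constraint `(I − ZÂ)Φ_x − ZB̂Φ_u = I` applied to `w`.
Conversely, `Φ_u := M` forces `Φ_x := (I − ZÂ)⁻¹(I + ZB̂M)`; since `ZÂ` is strictly block lower
triangular it is nilpotent, so the inverse is the finite Neumann series `∑_{k ≤ T} (ZÂ)^k`,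
which is block lower triangular, and `x = Φ_x w` is the dynamics solved for `x`. -/

open Matrix Finset

variable {a b c n p T : ℕ}

lemma blockLT_one : BlockLT (1 : Matrix (Fin (T + 1) × Fin a) (Fin (T + 1) × Fin a) ℝ) :=
  fun _ _ _ _ hts => one_apply_ne fun he => hts.ne (congrArg Prod.fst he)

namespace BlockLT

lemma add {M N : Matrix (Fin (T + 1) × Fin a) (Fin (T + 1) × Fin b) ℝ}
    (hM : BlockLT M) (hN : BlockLT N) : BlockLT (M + N) := by
  intro t s i j hts
  rw [Matrix.add_apply, hM t s i j hts, hN t s i j hts, add_zero]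

lemma sum {ι : Type*} {S : Finset ι}
    {f : ι → Matrix (Fin (T + 1) × Fin a) (Fin (T + 1) × Fin b) ℝ}
    (hf : ∀ k ∈ S, BlockLT (f k)) : BlockLT (∑ k ∈ S, f k) := by
  intro t s i j hts
  rw [Matrix.sum_apply]
  exact sum_eq_zero fun k hk => hf k hk t s i j hts

lemma mul {M : Matrix (Fin (T + 1) × Fin a) (Fin (T + 1) × Fin b) ℝ}
    {N : Matrix (Fin (T + 1) × Fin b) (Fin (T + 1) × Fin c) ℝ}
    (hM : BlockLT M) (hN : BlockLT N) : BlockLT (M * N) := by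
  intro t s i j hts
  rw [mul_apply]
  refine sum_eq_zero ?_
  rintro ⟨r, m⟩ -
  rcases lt_or_ge t r with htr | hrt
  · rw [hM t r i m htr, zero_mul]
  · rw [hN r s m j (hrt.trans_lt hts), mul_zero]

lemma pow {N : Matrix (Fin (T + 1) × Fin a) (Fin (T + 1) × Fin a) ℝ}
    (hN : BlockLT N) (k : ℕ) : BlockLT (N ^ k) := by
  induction k with
  | zero => simpa using blockLT_one
  | succ k ih => simpa [pow_succ] using ih.mul hN

end BlockLT

namespace StrictBlockLT

lemma blockLT {M : Matrix (Fin (T + 1) × Fin a) (Fin (T + 1) × Fin b) ℝ}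
    (hM : StrictBlockLT M) : BlockLT M :=
  fun t s i j hts => hM t s i j hts.le

lemma mul_blockLT {M : Matrix (Fin (T + 1) × Fin a) (Fin (T + 1) × Fin b) ℝ}
    {N : Matrix (Fin (T + 1) × Fin b) (Fin (T + 1) × Fin c) ℝ}
    (hM : StrictBlockLT M) (hN : BlockLT N) : StrictBlockLT (M * N) := by
  intro t s i j hts
  rw [mul_apply]
  refine sum_eq_zero ?_
  rintro ⟨r, m⟩ -
  rcases le_or_gt t r with htr | hrt
  · rw [hM t r i m htr, zero_mul]
  · rw [hN r s m j (hrt.trans_le hts), mul_zero]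

lemma pow_apply_eq_zero {N : Matrix (Fin (T + 1) × Fin a) (Fin (T + 1) × Fin a) ℝ}
    (hN : StrictBlockLT N) (k : ℕ) {t s : Fin (T + 1)} (i j : Fin a)
    (hts : (t : ℕ) < s + k) : (N ^ k) (t, i) (s, j) = 0 := by
  induction k generalizing t i with
  | zero =>
    exact one_apply_ne fun he => by
      have := congrArg (fun q => (q.1 : ℕ)) he
      simp only at this
      omega
  | succ k ih =>
    rw [pow_succ', mul_apply]
    refine sum_eq_zero ?_
    rintro ⟨r, m⟩ -
    rcases le_or_gt t r with htr | hrt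
    · rw [hN t r i m htr, zero_mul]
    · rw [ih m (by rw [Fin.lt_def] at hrt; omega), mul_zero]

lemma pow_eq_zero {N : Matrix (Fin (T + 1) × Fin a) (Fin (T + 1) × Fin a) ℝ}
    (hN : StrictBlockLT N) : N ^ (T + 1) = 0 := by
  ext ⟨t, i⟩ ⟨s, j⟩
  exact hN.pow_apply_eq_zero (T + 1) i j (by omega)

lemma one_sub_mul_geom_sum {N : Matrix (Fin (T + 1) × Fin a) (Fin (T + 1) × Fin a) ℝ}
    (hN : StrictBlockLT N) : (1 - N) * ∑ k ∈ range (T + 1), N ^ k = 1 := by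
  rw [mul_neg_geom_sum, hN.pow_eq_zero, sub_zero]

lemma geom_sum_mul_one_sub {N : Matrix (Fin (T + 1) × Fin a) (Fin (T + 1) × Fin a) ℝ}
    (hN : StrictBlockLT N) : (∑ k ∈ range (T + 1), N ^ k) * (1 - N) = 1 := by
  rw [geom_sum_mul_neg, hN.pow_eq_zero, sub_zero]

end StrictBlockLT

lemma strictBlockLT_shiftZ : StrictBlockLT (shiftZ n T) := by
  intro t s i j hts
  have : ¬((t : ℕ) = s + 1 ∧ i = j) := fun h => by rw [Fin.le_def] at hts; omega
  simp [shiftZ, this]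

lemma blockLT_hatA (A : Matrix (Fin n) (Fin n) ℝ) : BlockLT (hatA T A) :=
  fun _ _ _ _ hts => if_neg hts.ne

lemma blockLT_hatB (B : Matrix (Fin n) (Fin p) ℝ) : BlockLT (hatB T B) :=
  fun _ _ _ _ hts => if_neg fun h => hts.ne h.1

/-- Equivalence of the SLS parameterization and the disturbance-feedback parameterization
of Goulart et al.: for a fixed disturbance `w`, a trajectory pair `(x, u)` is realized by
some block lower triangular system responses `(Φ_x, Φ_u)` satisfying
`(I − ZÂ)Φ_x − ZB̂Φ_u = I`, `x = Φ_x w`, `u = Φ_u w`, if and only if it is realized by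
some block lower triangular disturbance-feedback gain `M` with `u = Mw` and
`(I − ZÂ)x = ZB̂u + w`. -/
theorem sls_eq_disturbance_feedback {n p T : ℕ}
    (A : Matrix (Fin n) (Fin n) ℝ) (B : Matrix (Fin n) (Fin p) ℝ)
    (w x : Fin (T + 1) × Fin n → ℝ) (u : Fin (T + 1) × Fin p → ℝ) :
    (∃ (Φx : Matrix (Fin (T + 1) × Fin n) (Fin (T + 1) × Fin n) ℝ)
       (Φu : Matrix (Fin (T + 1) × Fin p) (Fin (T + 1) × Fin n) ℝ),
        BlockLT Φx ∧ BlockLT Φu ∧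
        (1 - shiftZ n T * hatA T A) * Φx - shiftZ n T * hatB T B * Φu = 1 ∧
        x = Φx.mulVec w ∧ u = Φu.mulVec w) ↔
    (∃ M : Matrix (Fin (T + 1) × Fin p) (Fin (T + 1) × Fin n) ℝ,
        BlockLT M ∧ u = M.mulVec w ∧
        (1 - shiftZ n T * hatA T A).mulVec x =
          (shiftZ n T * hatB T B).mulVec u + w) := by
  set ZA := shiftZ n T * hatA T A
  set ZB := shiftZ n T * hatB T B
  constructor
  · rintro ⟨Φx, Φu, -, hΦu, hΦ, rfl, rfl⟩
    refine ⟨Φu, hΦu, rfl, ?_⟩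
    rw [mulVec_mulVec, mulVec_mulVec, sub_eq_iff_eq_add.mp hΦ, add_mulVec, one_mulVec,
      add_comm w]
  · rintro ⟨M, hM, rfl, hx⟩
    have hZA : StrictBlockLT ZA := strictBlockLT_shiftZ.mul_blockLT (blockLT_hatA A)
    have hZB : StrictBlockLT ZB := strictBlockLT_shiftZ.mul_blockLT (blockLT_hatB B)
    set S := ∑ k ∈ range (T + 1), ZA ^ k
    have hS : BlockLT S := BlockLT.sum fun k _ => hZA.blockLT.pow k
    refine ⟨S * (1 + ZB * M), M, hS.mul (blockLT_one.add (hZB.mul_blockLT hM).blockLT), hM,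
      ?_, ?_, rfl⟩
    · rw [← mul_assoc, hZA.one_sub_mul_geom_sum, one_mul, add_sub_cancel_right]
    · rw [← mulVec_mulVec, add_mulVec, one_mulVec, ← mulVec_mulVec, add_comm w, ← hx,
        mulVec_mulVec, hZA.geom_sum_mul_one_sub, one_mulVec]
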